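/- Let n ≥ 3, and let Ω ⊆ ℝⁿ be a nonempty open set. Suppose 1 < q₀ ≤ q₁ < ∞ and 0 ≤ λ₁ ≤ λ₀ < n satisfy (n − λ₀)/q₀ = (n − λ₁)/q₁, and let q₀′, q₁′ denote the conjugate exponents. Then the block space H_{q₀′,λ₀}(Ω) embeds continuously into H_{q₁′,λ₁}(Ω). Moreover, setting α := (n − λ)/q for 1 < q < ∞ and 0 ≤ λ < n, the block space H_{q′,λ}(Ω) embeds continuously into L^{n/(n−α)}(Ω). -/

import Mathlib

open MeasureTheory Metric Set Filter
open scoped ENNReal Topology RealInnerProductSpace NNReal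

noncomputable section

/-- Euclidean space `ℝⁿ`. -/
abbrev Euc (n : ℕ) : Type := EuclideanSpace ℝ (Fin n)

variable {n : ℕ} {F : Type*} [NormedAddCommGroup F] [NormedSpace ℝ F]

/-- The Morrey norm `‖f‖_{M_{q,λ}(Ω)} = sup_{x ∈ Ω, R > 0} R^{-λ/q} ‖f‖_{L^q(Ω ∩ B(x,R))}`. -/
def morreyNorm (q lam : ℝ) (Ω : Set (Euc n)) (f : Euc n → F) : ℝ≥0∞ :=
  ⨆ (x : Euc n) (_ : x ∈ Ω) (R : ℝ) (_ : 0 < R),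
    ENNReal.ofReal (R ^ (-(lam / q))) *
      eLpNorm f (ENNReal.ofReal q) (volume.restrict (Ω ∩ ball x R))

/-- `f ∈ L^q_loc(Ω̄)`. -/
def LocLqOn (q : ℝ) (Ω : Set (Euc n)) (f : Euc n → F) : Prop :=
  ∀ K : Set (Euc n), IsCompact K → MemLp f (ENNReal.ofReal q) (volume.restrict (Ω ∩ K))

/-- Membership in the Morrey space `M_{q,λ}(Ω)`. -/
def MemMorrey (q lam : ℝ) (Ω : Set (Euc n)) (f : Euc n → F) : Prop :=
  LocLqOn q Ω f ∧ morreyNorm q lam Ω f ≠ ⊤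

/-- `C_0^∞(Ω̄)`: smooth with compact support contained in `Ω̄`. -/
def IsTestOnClosure (Ω : Set (Euc n)) (g : Euc n → F) : Prop :=
  ContDiff ℝ (⊤ : ℕ∞) g ∧ HasCompactSupport g ∧ tsupport g ⊆ closure Ω

/-- `C_0^∞(Ω)`: smooth, compact support contained in `Ω`. -/
def IsTestIn (Ω : Set (Euc n)) (g : Euc n → F) : Prop :=
  ContDiff ℝ (⊤ : ℕ∞) g ∧ HasCompactSupport g ∧ tsupport g ⊆ Ω

/-- Membership in the Zorko space `M̊_{q,λ}(Ω)`: the closure of `C_0^∞(Ω̄)` in `M_{q,λ}(Ω)`. -/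
def MemZorko (q lam : ℝ) (Ω : Set (Euc n)) (f : Euc n → F) : Prop :=
  MemMorrey q lam Ω f ∧
    ∀ ε : ℝ, 0 < ε → ∃ g : Euc n → F, IsTestOnClosure Ω g ∧
      morreyNorm q lam Ω (f - g) < ENNReal.ofReal ε

/-- A `(p,λ)`-block on Ω (supported in some `Ω ∩ B(x,R)` with
`R^{λ/p'} ‖ρ‖_{L^p(Ω ∩ B(x,R))} ≤ 1`, where `p'` is the conjugate exponent of `p`). -/
def IsBlock (p lam : ℝ) (Ω : Set (Euc n)) (ρ : Euc n → F) : Prop :=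
  ∃ R : ℝ, 0 < R ∧ ∃ x ∈ Ω,
    Function.support ρ ⊆ closure (Ω ∩ ball x R) ∧
    MemLp ρ (ENNReal.ofReal p) (volume.restrict (Ω ∩ ball x R)) ∧
    ENNReal.ofReal (R ^ (lam * (p - 1) / p)) *
      eLpNorm ρ (ENNReal.ofReal p) (volume.restrict (Ω ∩ ball x R)) ≤ 1

/-- A block representation `f = Σ c_k φ_k` with `(p,λ)`-blocks `φ_k` and `{c_k} ∈ ℓ¹`. -/
def BlockRep (p lam : ℝ) (Ω : Set (Euc n)) (f : Euc n → F)
    (c : ℕ → ℝ) (φ : ℕ → Euc n → F) : Prop :=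
  (∀ k, IsBlock p lam Ω (φ k)) ∧ Summable (fun k => |c k|) ∧
    ∀ᵐ x ∂(volume.restrict Ω), HasSum (fun k => c k • φ k x) (f x)

/-- Membership in the block space `H_{p,λ}(Ω)`. -/
def MemBlock (p lam : ℝ) (Ω : Set (Euc n)) (f : Euc n → F) : Prop :=
  ∃ c φ, BlockRep p lam Ω f c φ

/-- The block space norm: infimum of `Σ |c_k|` over block representations. -/
def blockNorm (p lam : ℝ) (Ω : Set (Euc n)) (f : Euc n → F) : ℝ≥0∞ :=
  ⨅ (c : ℕ → ℝ) (φ : ℕ → Euc n → F) (_ : BlockRep p lam Ω f c φ),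
    ENNReal.ofReal (∑' k, |c k|)

/-- `g` is the weak `i`-th partial derivative of `f` on `Ω`. -/
def HasWeakPartialDeriv (Ω : Set (Euc n)) (f g : Euc n → ℝ) (i : Fin n) : Prop :=
  ∀ φ : Euc n → ℝ, IsTestIn Ω φ →
    ∫ x in Ω, f x * fderiv ℝ φ x (EuclideanSpace.single i 1) = - ∫ x in Ω, g x * φ x

/-- `v` is the weak gradient of `p` on `Ω`. -/
def HasWeakGradient (Ω : Set (Euc n)) (p : Euc n → ℝ) (v : Euc n → Euc n) : Prop :=
  ∀ i : Fin n, HasWeakPartialDeriv Ω p (fun x => v x i) i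

/-- Locally integrable on `Ω̄` (i.e. integrable on `Ω ∩ K` for every compact `K`). -/
def LocIntOn (Ω : Set (Euc n)) (f : Euc n → F) : Prop :=
  ∀ K : Set (Euc n), IsCompact K → IntegrableOn f (Ω ∩ K) volume

/-- `v = ∇p` for some `p ∈ W^{1,1}_loc(Ω̄)`. -/
def IsGradField (Ω : Set (Euc n)) (v : Euc n → Euc n) : Prop :=
  ∃ p : Euc n → ℝ, LocIntOn Ω p ∧ LocIntOn Ω v ∧ HasWeakGradient Ω p v

/-- A divergence-free test vector field in `C^∞_{0,σ}(Ω)`. -/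
def IsSolenoidalTest (Ω : Set (Euc n)) (w : Euc n → Euc n) : Prop :=
  ContDiff ℝ (⊤ : ℕ∞) w ∧ HasCompactSupport w ∧ tsupport w ⊆ Ω ∧
    ∀ x : Euc n, (∑ i : Fin n, fderiv ℝ (fun y => w y i) x (EuclideanSpace.single i 1)) = 0

/-- Membership in `S M̊_{q,λ}(Ω)`: closure of `C^∞_{0,σ}(Ω)` in the Morrey norm. -/
def MemSZorko (q lam : ℝ) (Ω : Set (Euc n)) (u : Euc n → Euc n) : Prop :=
  MemZorko q lam Ω u ∧
    ∀ ε : ℝ, 0 < ε → ∃ w : Euc n → Euc n, IsSolenoidalTest Ω w ∧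
      morreyNorm q lam Ω (u - w) < ENNReal.ofReal ε

/-- Classical `i`-th partial derivative. -/
def pderiv' (i : Fin n) (f : Euc n → ℝ) : Euc n → ℝ :=
  fun x => fderiv ℝ f x (EuclideanSpace.single i 1)

/-- Iterated classical partial derivative along a list of directions. -/
def pderivList : List (Fin n) → (Euc n → ℝ) → (Euc n → ℝ)
  | [] => fun f => f
  | i :: l => fun f => pderivList l (pderiv' i f)

/-- Iterated weak derivative along a list of directions. -/
def HasWeakDerivAlong (Ω : Set (Euc n)) : List (Fin n) → (Euc n → ℝ) → (Euc n → ℝ) → Prop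
  | [] => fun f g => ∀ᵐ x ∂(volume.restrict Ω), g x = f x
  | i :: l => fun f g => ∃ h, HasWeakPartialDeriv Ω f h i ∧ HasWeakDerivAlong Ω l h g

/-- Membership in the Sobolev–Morrey space `W^m M_{q,λ}(Ω)`. -/
def MemSobolevMorrey (m : ℕ) (q lam : ℝ) (Ω : Set (Euc n)) (f : Euc n → ℝ) : Prop :=
  MemMorrey q lam Ω f ∧ ∀ l : List (Fin n), l.length ≤ m →
    ∃ g, HasWeakDerivAlong Ω l f g ∧ MemMorrey q lam Ω g

/-- Membership in the Sobolev–Zorko space `W^m M̊_{q,λ}(Ω)`. -/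
def MemSobolevZorko (m : ℕ) (q lam : ℝ) (Ω : Set (Euc n)) (f : Euc n → ℝ) : Prop :=
  MemZorko q lam Ω f ∧ ∀ l : List (Fin n), l.length ≤ m →
    ∃ g, HasWeakDerivAlong Ω l f g ∧ MemZorko q lam Ω g

/-- Membership in the Sobolev–block space `W^m H_{p,λ}(Ω)`. -/
def MemSobolevBlock (m : ℕ) (p lam : ℝ) (Ω : Set (Euc n)) (f : Euc n → ℝ) : Prop :=
  MemBlock p lam Ω f ∧ ∀ l : List (Fin n), l.length ≤ m →
    ∃ g, HasWeakDerivAlong Ω l f g ∧ MemBlock p lam Ω g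

/-- `f ∈ W^1 M̊_{q,λ}(Ω)` with weak gradient `v`. -/
def MemW1Zorko (q lam : ℝ) (Ω : Set (Euc n)) (f : Euc n → ℝ) (v : Euc n → Euc n) : Prop :=
  MemZorko q lam Ω f ∧ HasWeakGradient Ω f v ∧
    ∀ i : Fin n, MemZorko q lam Ω (fun x => v x i)

/-- `f ∈ W^1_0 M̊_{q,λ}(Ω)` with weak gradient `v`: member of the closure of `C_0^∞(Ω)`
in the `W^1 M_{q,λ}(Ω)` norm. -/
def MemW10Zorko (q lam : ℝ) (Ω : Set (Euc n)) (f : Euc n → ℝ) (v : Euc n → Euc n) : Prop :=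
  MemMorrey q lam Ω f ∧ HasWeakGradient Ω f v ∧
    (∀ i : Fin n, MemMorrey q lam Ω (fun x => v x i)) ∧
    ∀ ε : ℝ, 0 < ε → ∃ g : Euc n → ℝ, IsTestIn Ω g ∧
      morreyNorm q lam Ω (f - g) < ENNReal.ofReal ε ∧
      ∀ i : Fin n,
        morreyNorm q lam Ω (fun x => v x i - fderiv ℝ g x (EuclideanSpace.single i 1))
          < ENNReal.ofReal ε

/-- `f ∈ W^1 H_{p,λ}(Ω)` with weak gradient `v`. -/
def MemW1Block (p lam : ℝ) (Ω : Set (Euc n)) (f : Euc n → ℝ) (v : Euc n → Euc n) : Prop :=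
  MemBlock p lam Ω f ∧ HasWeakGradient Ω f v ∧
    ∀ i : Fin n, MemBlock p lam Ω (fun x => v x i)

/-- Near `x`, `Ω` is the open region above the graph of a `C¹` function over a hyperplane. -/
def IsC1GraphAt (Ω : Set (Euc n)) (x : Euc n) : Prop :=
  ∃ r : ℝ, 0 < r ∧ ∃ v : Euc n, ‖v‖ = 1 ∧ ∃ ψ : Euc n → ℝ, ContDiff ℝ 1 ψ ∧
    Ω ∩ ball x r = {y ∈ ball x r | ψ (y - ⟪y, v⟫ • v) < ⟪y, v⟫}

/-- A (nonempty, open) domain with `C¹` boundary. -/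
def IsC1Domain (Ω : Set (Euc n)) : Prop :=
  IsOpen Ω ∧ Ω.Nonempty ∧ ∀ x ∈ frontier Ω, IsC1GraphAt Ω x

/-- Near `x`, `Ω` is the open region above the graph of a Lipschitz function. -/
def IsLipGraphAt (Ω : Set (Euc n)) (x : Euc n) : Prop :=
  ∃ r : ℝ, 0 < r ∧ ∃ v : Euc n, ‖v‖ = 1 ∧ ∃ ψ : Euc n → ℝ, (∃ K : ℝ≥0, LipschitzWith K ψ) ∧
    Ω ∩ ball x r = {y ∈ ball x r | ψ (y - ⟪y, v⟫ • v) < ⟪y, v⟫}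

/-- A (nonempty, open) domain with Lipschitz boundary. -/
def IsLipschitzDomain (Ω : Set (Euc n)) : Prop :=
  IsOpen Ω ∧ Ω.Nonempty ∧ ∀ x ∈ frontier Ω, IsLipGraphAt Ω x

/-- A special Lipschitz domain: up to a rigid motion, the region above the graph of a
Lipschitz function `ψ` defined on a hyperplane. -/
def IsSpecialLipschitzDomain (Ω : Set (Euc n)) : Prop :=
  ∃ v : Euc n, ‖v‖ = 1 ∧ ∃ ψ : Euc n → ℝ, (∃ K : ℝ≥0, LipschitzWith K ψ) ∧
    Ω = {y : Euc n | ψ (y - ⟪y, v⟫ • v) < ⟪y, v⟫}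

/-- `g ∈ C^∞(Ω̄)`: smooth on an open neighborhood of `Ω̄`. -/
def SmoothOnClosure (Ω : Set (Euc n)) (g : Euc n → ℝ) : Prop :=
  ∃ U : Set (Euc n), IsOpen U ∧ closure Ω ⊆ U ∧ ContDiffOn ℝ (⊤ : ℕ∞) g U

/-- A function in `C^∞(Ω̄)` which is bounded together with all its partial derivatives. -/
def IsNiceOn (Ω : Set (Euc n)) (g : Euc n → ℝ) : Prop :=
  SmoothOnClosure Ω g ∧
    ∀ l : List (Fin n), ∃ C : ℝ, ∀ x ∈ closure Ω, |pderivList l g x| ≤ C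

/-- Membership in `𝔐^k_{q,λ}(Ω)`: the closure in `W^k M_{q,λ}(Ω)` of the set of functions
in `C^∞(Ω̄) ∩ W^k M_{q,λ}(Ω)` which are bounded together with all their derivatives. -/
def MemMk (k : ℕ) (q lam : ℝ) (Ω : Set (Euc n)) (f : Euc n → ℝ) : Prop :=
  MemSobolevMorrey k q lam Ω f ∧
    ∀ ε : ℝ, 0 < ε → ∃ g : Euc n → ℝ, IsNiceOn Ω g ∧
      MemSobolevMorrey k q lam Ω g ∧
      ∀ l : List (Fin n), l.length ≤ k → ∀ df, HasWeakDerivAlong Ω l f df →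
        morreyNorm q lam Ω (df - pderivList l g) < ENNReal.ofReal ε

/-! A block supported in `Ω ∩ B(x,R)` is controlled in every smaller exponent `s ≤ p` by
Hölder's inequality on the ball, `‖ρ‖_s ≤ |B(x,R)|^{1/s - 1/p} ‖ρ‖_p` with
`|B(x,R)| = |B(0,1)| Rⁿ`. The relation between the exponents is exactly what makes the powers
of `R` cancel: a fixed multiple of a `(q₀′,λ₀)`-block is a `(q₁′,λ₁)`-block, and every
`(q′,λ)`-block has `L^{n/(n-α)}` norm at most a constant. Both embeddings follow term by term from
a block decomposition, using Fatou's lemma for the partial sums in the second case. -/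

theorem aestronglyMeasurable_and_eLpNorm_le_of_hasSum_ae {α E : Type*} [MeasurableSpace α]
    {μ : Measure α} [NormedAddCommGroup E] [NormedSpace ℝ E] {p M : ℝ≥0∞} (hp : 1 ≤ p)
    {c : ℕ → ℝ} {φ : ℕ → α → E} {f : α → E}
    (hφ : ∀ k, AEStronglyMeasurable (φ k) μ) (hφM : ∀ k, eLpNorm (φ k) p μ ≤ M)
    (hf : ∀ᵐ x ∂μ, HasSum (fun k => c k • φ k x) (f x)) :
    AEStronglyMeasurable f μ ∧ eLpNorm f p μ ≤ M * ∑' k, ‖c k‖ₑ := by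
  set S : ℕ → α → E := fun N => ∑ k ∈ Finset.range N, c k • φ k
  have hS : ∀ N, AEStronglyMeasurable (S N) μ := fun N =>
    Finset.aestronglyMeasurable_sum _ fun k _ => (hφ k).const_smul (c k)
  have hlim : ∀ᵐ x ∂μ, Tendsto (fun N => S N x) atTop (𝓝 (f x)) := by
    filter_upwards [hf] with x hx
    simpa [S, Finset.sum_apply] using hx.tendsto_sum_nat
  have hSM : ∀ N, eLpNorm (S N) p μ ≤ M * ∑' k, ‖c k‖ₑ := fun N => calc
    eLpNorm (S N) p μ ≤ ∑ k ∈ Finset.range N, eLpNorm (c k • φ k) p μ :=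
        eLpNorm_sum_le (fun k _ => (hφ k).const_smul _) hp
    _ ≤ ∑ k ∈ Finset.range N, ‖c k‖ₑ * M := Finset.sum_le_sum fun k _ => by
        rw [eLpNorm_const_smul]; gcongr; exact hφM k
    _ ≤ ∑' k, ‖c k‖ₑ * M := ENNReal.sum_le_tsum _
    _ = M * ∑' k, ‖c k‖ₑ := by rw [ENNReal.tsum_mul_right, mul_comm]
  refine ⟨aestronglyMeasurable_of_tendsto_ae atTop hS hlim, ?_⟩
  calc eLpNorm f p μ ≤ atTop.liminf fun N => eLpNorm (S N) p μ :=
        Lp.eLpNorm_lim_le_liminf_eLpNorm hS f hlim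
    _ ≤ M * ∑' k, ‖c k‖ₑ := liminf_le_of_le (by isBoundedDefault) fun b hb =>
        let ⟨N, hN⟩ := hb.exists; hN.trans (hSM N)

theorem exists_pos_volume_ball_rpow_eq_ofReal (n : ℕ) (θ : ℝ) :
    ∃ C : ℝ, 0 < C ∧ volume (ball (0 : Euc n) 1) ^ θ = ENNReal.ofReal C := by
  have hpos : 0 < volume (ball (0 : Euc n) 1) := measure_ball_pos volume 0 one_pos
  have hfin : volume (ball (0 : Euc n) 1) ^ θ ≠ ⊤ :=
    ENNReal.rpow_ne_top_of_ne_zero hpos.ne' measure_ball_lt_top.ne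
  exact ⟨_, ENNReal.toReal_pos (ENNReal.rpow_pos hpos measure_ball_lt_top.ne).ne' hfin,
    (ENNReal.ofReal_toReal hfin).symm⟩

theorem volume_inter_ball_rpow_le (Ω : Set (Euc n)) (x : Euc n) {R θ : ℝ} (hR : 0 < R)
    (hθ : 0 ≤ θ) :
    volume (Ω ∩ ball x R) ^ θ
      ≤ ENNReal.ofReal (R ^ (n * θ)) * volume (ball (0 : Euc n) 1) ^ θ := by
  calc volume (Ω ∩ ball x R) ^ θ
      ≤ (ENNReal.ofReal (R ^ n) * volume (ball (0 : Euc n) 1)) ^ θ := by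
        gcongr
        refine (measure_mono inter_subset_right).trans_eq ?_
        rw [Measure.addHaar_ball_of_pos volume x hR, finrank_euclideanSpace_fin]
    _ = _ := by
        rw [ENNReal.mul_rpow_of_nonneg _ _ hθ, ENNReal.ofReal_rpow_of_pos (by positivity),
          ← Real.rpow_natCast, ← Real.rpow_mul hR.le]

theorem rpow_mul_eLpNorm_inter_ball_le {E : Type*} [NormedAddCommGroup E] (Ω : Set (Euc n))
    (x : Euc n) {s p t a R : ℝ} (hs : 0 < s) (hsp : s ≤ p) (hR : 0 < R)
    (hexp : t + n * (1 / s - 1 / p) = a) {ρ : Euc n → E}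
    (hρ : AEStronglyMeasurable ρ (volume.restrict (Ω ∩ ball x R))) :
    ENNReal.ofReal (R ^ t) * eLpNorm ρ (.ofReal s) (volume.restrict (Ω ∩ ball x R))
      ≤ volume (ball (0 : Euc n) 1) ^ (1 / s - 1 / p) *
        (ENNReal.ofReal (R ^ a) * eLpNorm ρ (.ofReal p) (volume.restrict (Ω ∩ ball x R))) := by
  set θ := 1 / s - 1 / p
  set μ := volume.restrict (Ω ∩ ball x R)
  have hθ : 0 ≤ θ := sub_nonneg.2 (one_div_le_one_div_of_le hs hsp)
  have holder : eLpNorm ρ (.ofReal s) μ ≤ eLpNorm ρ (.ofReal p) μ * volume (Ω ∩ ball x R) ^ θ := by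
    have h := eLpNorm_le_eLpNorm_mul_rpow_measure_univ (ENNReal.ofReal_le_ofReal hsp) hρ
    rwa [Measure.restrict_apply_univ, ENNReal.toReal_ofReal hs.le,
      ENNReal.toReal_ofReal (hs.le.trans hsp)] at h
  calc ENNReal.ofReal (R ^ t) * eLpNorm ρ (.ofReal s) μ
      ≤ ENNReal.ofReal (R ^ t) * (eLpNorm ρ (.ofReal p) μ *
        (ENNReal.ofReal (R ^ (n * θ)) * volume (ball (0 : Euc n) 1) ^ θ)) := by
        gcongr
        exact holder.trans (by gcongr; exact volume_inter_ball_rpow_le Ω x hR hθ)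
    _ = volume (ball (0 : Euc n) 1) ^ θ *
        ((ENNReal.ofReal (R ^ t) * ENNReal.ofReal (R ^ (n * θ))) * eLpNorm ρ (.ofReal p) μ) := by
        ring
    _ = _ := by rw [← ENNReal.ofReal_mul (by positivity), ← Real.rpow_add hR, hexp]

theorem ae_eq_indicator_of_support_subset_closure {E : Type*} [Zero E] {Ω : Set (Euc n)}
    (hΩ : MeasurableSet Ω) {x : Euc n} {R : ℝ} (hR : R ≠ 0) {ρ : Euc n → E}
    (hρ : Function.support ρ ⊆ closure (Ω ∩ ball x R)) :
    ρ =ᵐ[volume.restrict Ω] (Ω ∩ ball x R).indicator ρ := by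
  have hsphere : ∀ᵐ y ∂(volume : Measure (Euc n)), y ∉ sphere x R :=
    measure_eq_zero_iff_ae_notMem.mp (Measure.addHaar_sphere_of_ne_zero volume x hR)
  filter_upwards [ae_restrict_of_ae hsphere, ae_restrict_mem hΩ] with y hy hyΩ
  by_cases hyB : y ∈ ball x R
  · rw [indicator_of_mem (show y ∈ Ω ∩ ball x R from ⟨hyΩ, hyB⟩)]
  · rw [indicator_of_notMem fun h => hyB h.2]
    by_contra hne
    have hy' : y ∈ closedBall x R :=
      closure_ball_subset_closedBall (closure_mono inter_subset_right (hρ hne))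
    exact hy (le_antisymm hy' (not_lt.1 hyB))

theorem IsBlock.aestronglyMeasurable_and_eLpNorm_le {E : Type*} [NormedAddCommGroup E]
    {Ω : Set (Euc n)} (hΩ : MeasurableSet Ω) {s p lam : ℝ} (hs : 0 < s) (hsp : s ≤ p)
    (hexp : n * (1 / s - 1 / p) = lam * (p - 1) / p) {ρ : Euc n → E} (hρ : IsBlock p lam Ω ρ) :
    AEStronglyMeasurable ρ (volume.restrict Ω) ∧
      eLpNorm ρ (.ofReal s) (volume.restrict Ω)
        ≤ volume (ball (0 : Euc n) 1) ^ (1 / s - 1 / p) := by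
  obtain ⟨R, hR, x, -, hsupp, hmem, hbd⟩ := hρ
  have hB : MeasurableSet (Ω ∩ ball x R) := hΩ.inter measurableSet_ball
  have hρ_eq := ae_eq_indicator_of_support_subset_closure hΩ hR.ne' hsupp
  have hrestrict :
      (volume.restrict Ω).restrict (Ω ∩ ball x R) = volume.restrict (Ω ∩ ball x R) := by
    rw [Measure.restrict_restrict hB, inter_right_comm, inter_self]
  refine ⟨((aestronglyMeasurable_indicator_iff hB).2 (hrestrict ▸ hmem.1)).congr hρ_eq.symm, ?_⟩
  have h := rpow_mul_eLpNorm_inter_ball_le Ω x hs hsp hR (t := 0) (by rw [zero_add, hexp]) hmem.1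
  rw [Real.rpow_zero, ENNReal.ofReal_one, one_mul] at h
  rw [eLpNorm_congr_ae hρ_eq, eLpNorm_indicator_eq_eLpNorm_restrict hB, hrestrict]
  exact h.trans (mul_le_of_le_one_right' hbd)

theorem IsBlock.inv_smul {Ω : Set (Euc n)} {p₀ p₁ lam₀ lam₁ : ℝ} (hp₁ : 0 < p₁) (hp : p₁ ≤ p₀)
    (hexp : lam₁ * (p₁ - 1) / p₁ + n * (1 / p₁ - 1 / p₀) = lam₀ * (p₀ - 1) / p₀) {C : ℝ}
    (hC : 0 < C) (hKC : volume (ball (0 : Euc n) 1) ^ (1 / p₁ - 1 / p₀) = ENNReal.ofReal C)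
    {ρ : Euc n → F} (hρ : IsBlock p₀ lam₀ Ω ρ) : IsBlock p₁ lam₁ Ω (C⁻¹ • ρ) := by
  obtain ⟨R, hR, x, hx, hsupp, hmem, hbd⟩ := hρ
  set μ := volume.restrict (Ω ∩ ball x R)
  have : IsFiniteMeasure μ :=
    isFiniteMeasure_restrict.2 ((measure_mono inter_subset_right).trans_lt measure_ball_lt_top).ne
  refine ⟨R, hR, x, hx, (Function.support_const_smul_subset _ _).trans hsupp,
    (hmem.mono_exponent (ENNReal.ofReal_le_ofReal hp)).const_smul _, ?_⟩
  calc ENNReal.ofReal (R ^ (lam₁ * (p₁ - 1) / p₁)) * eLpNorm (C⁻¹ • ρ) (.ofReal p₁) μ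
      = ‖C⁻¹‖ₑ * (ENNReal.ofReal (R ^ (lam₁ * (p₁ - 1) / p₁)) * eLpNorm ρ (.ofReal p₁) μ) := by
        rw [eLpNorm_const_smul]; ring
    _ ≤ ‖C⁻¹‖ₑ * ENNReal.ofReal C := by
        gcongr
        rw [← hKC]
        exact (rpow_mul_eLpNorm_inter_ball_le Ω x hp₁ hp hR hexp hmem.1).trans
          (mul_le_of_le_one_right' hbd)
    _ = 1 := by
        rw [Real.enorm_eq_ofReal_abs, abs_of_pos (inv_pos.2 hC),
          ← ENNReal.ofReal_mul (by positivity), inv_mul_cancel₀ hC.ne', ENNReal.ofReal_one]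

theorem BlockRep.inv_smul {p₀ p₁ lam₀ lam₁ : ℝ} {Ω : Set (Euc n)} {f : Euc n → F} {c : ℕ → ℝ}
    {φ : ℕ → Euc n → F} {C : ℝ} (hC : C ≠ 0) (hφ : ∀ k, IsBlock p₁ lam₁ Ω (C⁻¹ • φ k))
    (h : BlockRep p₀ lam₀ Ω f c φ) :
    BlockRep p₁ lam₁ Ω f (fun k => C * c k) (fun k => C⁻¹ • φ k) := by
  obtain ⟨-, hc, hsum⟩ := h
  refine ⟨hφ, by simpa only [abs_mul] using hc.mul_left |C|, ?_⟩
  filter_upwards [hsum] with y hy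
  convert hy using 2 with k
  rw [Pi.smul_apply, smul_smul, mul_right_comm, mul_inv_cancel₀ hC, one_mul]

theorem le_mul_blockNorm {p lam : ℝ} {Ω : Set (Euc n)} {f : Euc n → F} {a M : ℝ≥0∞}
    (hM₀ : M ≠ 0) (hM : M ≠ ⊤)
    (h : ∀ c φ, BlockRep p lam Ω f c φ → a ≤ M * ENNReal.ofReal (∑' k, |c k|)) :
    a ≤ M * blockNorm p lam Ω f := by
  simp only [blockNorm, ENNReal.mul_iInf_of_ne hM₀ hM]
  exact le_iInf fun c => le_iInf fun φ => le_iInf (h c φ)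

theorem MemBlock.memBlock_and_blockNorm_le {p₀ p₁ lam₀ lam₁ : ℝ} {Ω : Set (Euc n)}
    {f : Euc n → F} {C : ℝ} (hC : 0 < C)
    (hblock : ∀ ρ : Euc n → F, IsBlock p₀ lam₀ Ω ρ → IsBlock p₁ lam₁ Ω (C⁻¹ • ρ))
    (hf : MemBlock p₀ lam₀ Ω f) :
    MemBlock p₁ lam₁ Ω f ∧ blockNorm p₁ lam₁ Ω f ≤ ENNReal.ofReal C * blockNorm p₀ lam₀ Ω f := by
  have hrep : ∀ c φ, BlockRep p₀ lam₀ Ω f c φ →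
      BlockRep p₁ lam₁ Ω f (fun k => C * c k) (fun k => C⁻¹ • φ k) := fun c φ h =>
    h.inv_smul hC.ne' fun k => hblock _ (h.1 k)
  obtain ⟨c, φ, h⟩ := hf
  refine ⟨⟨_, _, hrep c φ h⟩, le_mul_blockNorm (by simpa using hC) ENNReal.ofReal_ne_top ?_⟩
  intro c φ h
  calc blockNorm p₁ lam₁ Ω f ≤ ENNReal.ofReal (∑' k, |C * c k|) :=
        iInf_le_of_le _ (iInf_le_of_le _ (iInf_le _ (hrep c φ h)))
    _ = ENNReal.ofReal C * ENNReal.ofReal (∑' k, |c k|) := by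
        simp_rw [abs_mul, abs_of_pos hC, tsum_mul_left, ENNReal.ofReal_mul hC.le]

theorem MemBlock.memLp_and_eLpNorm_le {p lam s : ℝ} {Ω : Set (Euc n)} {f : Euc n → F} {C : ℝ}
    (hs : 1 ≤ s) (hC : 0 < C)
    (hblock : ∀ ρ : Euc n → F, IsBlock p lam Ω ρ → AEStronglyMeasurable ρ (volume.restrict Ω) ∧
      eLpNorm ρ (.ofReal s) (volume.restrict Ω) ≤ ENNReal.ofReal C)
    (hf : MemBlock p lam Ω f) :
    MemLp f (.ofReal s) (volume.restrict Ω) ∧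
      eLpNorm f (.ofReal s) (volume.restrict Ω) ≤ ENNReal.ofReal C * blockNorm p lam Ω f := by
  have hbound : ∀ c φ, BlockRep p lam Ω f c φ → AEStronglyMeasurable f (volume.restrict Ω) ∧
      eLpNorm f (.ofReal s) (volume.restrict Ω)
        ≤ ENNReal.ofReal C * ENNReal.ofReal (∑' k, |c k|) := by
    rintro c φ ⟨hφ, hc, hsum⟩
    rw [ENNReal.ofReal_tsum_of_nonneg (fun k => abs_nonneg _) hc]
    simpa only [Real.enorm_eq_ofReal_abs] using
      aestronglyMeasurable_and_eLpNorm_le_of_hasSum_ae (by simpa using hs)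
        (fun k => (hblock _ (hφ k)).1) (fun k => (hblock _ (hφ k)).2) hsum
  obtain ⟨c, φ, h⟩ := hf
  refine ⟨⟨(hbound c φ h).1, (hbound c φ h).2.trans_lt (by finiteness)⟩,
    le_mul_blockNorm (by simpa using hC) ENNReal.ofReal_ne_top fun c φ h => (hbound c φ h).2⟩

theorem exponent_relation_of_scaling {n q₀ q₁ lam₀ lam₁ : ℝ} (hq₀ : 1 < q₀) (hq₁ : 1 < q₁)
    (hscale : (n - lam₀) / q₀ = (n - lam₁) / q₁) :
    lam₁ * (q₁ / (q₁ - 1) - 1) / (q₁ / (q₁ - 1)) + n * (1 / (q₁ / (q₁ - 1)) - 1 / (q₀ / (q₀ - 1)))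
      = lam₀ * (q₀ / (q₀ - 1) - 1) / (q₀ / (q₀ - 1)) := by
  rw [div_eq_div_iff (by linarith) (by linarith)] at hscale
  field_simp [(by linarith : q₀ - 1 ≠ 0), (by linarith : q₁ - 1 ≠ 0)]
  linear_combination hscale

theorem sobolev_exponent_bounds {n q lam : ℝ} (hq : 1 < q) (hlam0 : 0 ≤ lam) (hlamn : lam < n) :
    1 ≤ n / (n - (n - lam) / q) ∧ n / (n - (n - lam) / q) ≤ q / (q - 1) ∧
      n * (1 / (n / (n - (n - lam) / q)) - 1 / (q / (q - 1)))
        = lam * (q / (q - 1) - 1) / (q / (q - 1)) := by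
  set α := (n - lam) / q
  have hα : 0 < α := div_pos (by linarith) (by linarith)
  have hαn : q * α = n - lam := mul_div_cancel₀ _ (by linarith)
  clear_value α
  have hnα : 0 < n - α := by nlinarith
  refine ⟨by rw [le_div_iff₀ hnα]; linarith,
    by rw [div_le_div_iff₀ hnα (by linarith)]; nlinarith, ?_⟩
  field_simp [(by linarith : n ≠ 0), (by linarith : q ≠ 0), (by linarith : q - 1 ≠ 0)]
  linear_combination -hαn

theorem block_space_embeddings_general
    {n : ℕ} (Ω : Set (Euc n)) (hΩo : IsOpen Ω)
    (q₀ q₁ lam₀ lam₁ : ℝ) (hq₀ : 1 < q₀) (hq₀₁ : q₀ ≤ q₁)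
    (hscale : (n - lam₀) / q₀ = (n - lam₁) / q₁)
    (q lam : ℝ) (hq : 1 < q) (hlam0 : 0 ≤ lam) (hlamn : lam < n) :
    (∃ c : ℝ, 0 < c ∧ ∀ f : Euc n → ℝ,
      MemBlock (q₀ / (q₀ - 1)) lam₀ Ω f →
        MemBlock (q₁ / (q₁ - 1)) lam₁ Ω f ∧
        blockNorm (q₁ / (q₁ - 1)) lam₁ Ω f
          ≤ ENNReal.ofReal c * blockNorm (q₀ / (q₀ - 1)) lam₀ Ω f) ∧
    (∃ c : ℝ, 0 < c ∧ ∀ f : Euc n → ℝ,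
      MemBlock (q / (q - 1)) lam Ω f →
        MemLp f (ENNReal.ofReal ((n : ℝ) / ((n : ℝ) - (n - lam) / q))) (volume.restrict Ω) ∧
        eLpNorm f (ENNReal.ofReal ((n : ℝ) / ((n : ℝ) - (n - lam) / q))) (volume.restrict Ω)
          ≤ ENNReal.ofReal c * blockNorm (q / (q - 1)) lam Ω f) := by
  have hq₁ : 1 < q₁ := hq₀.trans_le hq₀₁
  constructor
  · have hp : q₁ / (q₁ - 1) ≤ q₀ / (q₀ - 1) := by
      rw [div_le_div_iff₀ (by linarith) (by linarith)]; nlinarith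
    obtain ⟨C, hC, hKC⟩ := exists_pos_volume_ball_rpow_eq_ofReal n
      (1 / (q₁ / (q₁ - 1)) - 1 / (q₀ / (q₀ - 1)))
    exact ⟨C, hC, fun f => MemBlock.memBlock_and_blockNorm_le hC fun ρ =>
      IsBlock.inv_smul (div_pos (by linarith) (by linarith)) hp
        (exponent_relation_of_scaling hq₀ hq₁ hscale) hC hKC⟩
  · obtain ⟨hs1, hsp, hexp⟩ := sobolev_exponent_bounds hq hlam0 hlamn
    obtain ⟨C, hC, hKC⟩ := exists_pos_volume_ball_rpow_eq_ofReal n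
      (1 / ((n : ℝ) / (n - (n - lam) / q)) - 1 / (q / (q - 1)))
    exact ⟨C, hC, fun f => MemBlock.memLp_and_eLpNorm_le hs1 hC fun ρ hρ =>
      hKC ▸ hρ.aestronglyMeasurable_and_eLpNorm_le hΩo.measurableSet (by linarith) hsp hexp⟩

/-- **Embeddings of block spaces.** If `(n − λ₀)/q₀ = (n − λ₁)/q₁` with
`1 < q₀ ≤ q₁ < ∞`, `0 ≤ λ₁ ≤ λ₀ < n`, then `H_{q₀′,λ₀}(Ω) ↪ H_{q₁′,λ₁}(Ω)` continuously.
Moreover, with `α := (n − λ)/q`, `H_{q′,λ}(Ω) ↪ L^{n/(n−α)}(Ω)` continuously. -/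
theorem block_space_embeddings
    {n : ℕ} (hn : 3 ≤ n) (Ω : Set (Euc n)) (hΩo : IsOpen Ω) (hΩne : Ω.Nonempty)
    (q₀ q₁ lam₀ lam₁ : ℝ) (hq₀ : 1 < q₀) (hq₀₁ : q₀ ≤ q₁)
    (hlam₁0 : 0 ≤ lam₁) (hlam₁₀ : lam₁ ≤ lam₀) (hlam₀n : lam₀ < n)
    (hscale : (n - lam₀) / q₀ = (n - lam₁) / q₁)
    (q lam : ℝ) (hq : 1 < q) (hlam0 : 0 ≤ lam) (hlamn : lam < n) :
    (∃ c : ℝ, 0 < c ∧ ∀ f : Euc n → ℝ,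
      MemBlock (q₀ / (q₀ - 1)) lam₀ Ω f →
        MemBlock (q₁ / (q₁ - 1)) lam₁ Ω f ∧
        blockNorm (q₁ / (q₁ - 1)) lam₁ Ω f
          ≤ ENNReal.ofReal c * blockNorm (q₀ / (q₀ - 1)) lam₀ Ω f) ∧
    (∃ c : ℝ, 0 < c ∧ ∀ f : Euc n → ℝ,
      MemBlock (q / (q - 1)) lam Ω f →
        MemLp f (ENNReal.ofReal ((n : ℝ) / ((n : ℝ) - (n - lam) / q))) (volume.restrict Ω) ∧
        eLpNorm f (ENNReal.ofReal ((n : ℝ) / ((n : ℝ) - (n - lam) / q))) (volume.restrict Ω)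
          ≤ ENNReal.ofReal c * blockNorm (q / (q - 1)) lam Ω f) :=
  block_space_embeddings_general Ω hΩo q₀ q₁ lam₀ lam₁ hq₀ hq₀₁ hscale q lam hq hlam0 hlamn
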